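/- Let d ≥ 2 and let ρ ∈ H^{1,2}_loc(ℝ^d) ∩ L^∞(ℝ^d) satisfy ρ ≥ θ a.e. for some θ > 0. Let A be a measurable, bounded, symmetric d×d matrix field and C a bounded anti-symmetric d×d matrix field (C^T = −C) on ℝ^d, with div(A+C) ∈ L²_loc(ℝ^d, ℝ^d) and ρ(A+C) having weak divergence div(ρ(A+C)) = ρ div(A+C) + (A+C^T)∇ρ ∈ L¹_loc. Then for every f ∈ C_0^∞(ℝ^d), ∫_{ℝ^d} ( trace(A ∇²f) + ⟨ div(A+C) + ρ^{−1}(A+C^T)∇ρ, ∇f ⟩ ) ρ dx = 0. -/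

import Mathlib

open Real MeasureTheory Filter

variable {d : ℕ}

/-- `f' : E → Fin d → ℝ` is the weak gradient of `f` on `ℝ^d`. -/
def IsWeakGrad (f : EuclideanSpace ℝ (Fin d) → ℝ)
    (f' : EuclideanSpace ℝ (Fin d) → Fin d → ℝ) : Prop :=
  ∀ φ : EuclideanSpace ℝ (Fin d) → ℝ, ContDiff ℝ (⊤ : ℕ∞) φ → HasCompactSupport φ →
    ∀ i : Fin d,
      ∫ x, f x * fderiv ℝ φ x (EuclideanSpace.single i 1) ∂volume
        = - ∫ x, f' x i * φ x ∂volume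

/-- infinitesimal invariance of `ρ dx`:
`∫ (trace(A∇²f) + ⟨div(A+C) + ρ⁻¹(A+Cᵀ)∇ρ, ∇f⟩) ρ dx = 0` for all `f ∈ C_0^∞(ℝ^d)`. -/
theorem stmt16 (hd : 2 ≤ d)
    (ρ : EuclideanSpace ℝ (Fin d) → ℝ) (ρ' : EuclideanSpace ℝ (Fin d) → Fin d → ℝ)
    (hρ_grad : IsWeakGrad ρ ρ')
    (hρ_loc : ∀ K : Set (EuclideanSpace ℝ (Fin d)), IsCompact K →
      IntegrableOn (fun x => ρ x ^ 2) K volume ∧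
      IntegrableOn (fun x => ∑ i, ρ' x i ^ 2) K volume)
    (hρ_bdd : MemLp ρ ⊤ volume)
    (θ : ℝ) (hθ : 0 < θ) (hρ_pos : ∀ᵐ x ∂volume, θ ≤ ρ x)
    (A C : EuclideanSpace ℝ (Fin d) → Matrix (Fin d) (Fin d) ℝ)
    (hA_meas : ∀ i j, Measurable fun x => A x i j)
    (hC_meas : ∀ i j, Measurable fun x => C x i j)
    (MA MC : ℝ)
    (hA_bdd : ∀ᵐ x ∂volume, ∀ i j, |A x i j| ≤ MA)
    (hC_bdd : ∀ᵐ x ∂volume, ∀ i j, |C x i j| ≤ MC)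
    (hA_symm : ∀ x i j, A x i j = A x j i)
    (hC_anti : ∀ x i j, C x i j = - C x j i)
    (G : EuclideanSpace ℝ (Fin d) → Fin d → ℝ)
    (hG_loc : ∀ K : Set (EuclideanSpace ℝ (Fin d)), IsCompact K →
      IntegrableOn (fun x => ∑ i, G x i ^ 2) K volume)
    -- `G = div(A+C)` in the weak (row-wise) sense of Definition 2.1(i)
    (hG_div : ∀ φ : Fin d → EuclideanSpace ℝ (Fin d) → ℝ,
      (∀ j, ContDiff ℝ (⊤ : ℕ∞) (φ j) ∧ HasCompactSupport (φ j)) →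
      ∫ x, ∑ i, ∑ j, (A x i j + C x i j)
          * fderiv ℝ (φ j) x (EuclideanSpace.single i 1) ∂volume
        = - ∫ x, ∑ j, G x j * φ j x ∂volume)
    -- `div(ρ(A+C)) = ρ div(A+C) + (A+Cᵀ)∇ρ ∈ L¹_loc`
    (hρAC_loc : ∀ j, LocallyIntegrable
      (fun x => ρ x * G x j + ∑ k, (A x j k + C x k j) * ρ' x k) volume)
    (hρAC_div : ∀ φ : Fin d → EuclideanSpace ℝ (Fin d) → ℝ,
      (∀ j, ContDiff ℝ (⊤ : ℕ∞) (φ j) ∧ HasCompactSupport (φ j)) →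
      ∫ x, ∑ i, ∑ j, ρ x * (A x i j + C x i j)
          * fderiv ℝ (φ j) x (EuclideanSpace.single i 1) ∂volume
        = - ∫ x, ∑ j, (ρ x * G x j + ∑ k, (A x j k + C x k j) * ρ' x k) * φ j x ∂volume) :
    ∀ f : EuclideanSpace ℝ (Fin d) → ℝ, ContDiff ℝ (⊤ : ℕ∞) f → HasCompactSupport f →
      ∫ x, ((∑ i, ∑ j, A x i j
              * fderiv ℝ (fun y => fderiv ℝ f y (EuclideanSpace.single j 1)) x
                  (EuclideanSpace.single i 1))
          + ∑ i, (G x i + (ρ x)⁻¹ * ∑ j, (A x i j + C x j i) * ρ' x j)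
              * fderiv ℝ f x (EuclideanSpace.single i 1)) * ρ x ∂volume = 0 := by
  intro f hf hfc
  classical
  -- test vector field φ j = ∂_j f
  set φ : Fin d → EuclideanSpace ℝ (Fin d) → ℝ :=
    fun j x => fderiv ℝ f x (EuclideanSpace.single j 1) with hφdef
  have hφ : ∀ j, ContDiff ℝ (⊤ : ℕ∞) (φ j) ∧ HasCompactSupport (φ j) := fun j =>
    ⟨(hf.fderiv_right (by simp)).clm_apply contDiff_const,
      HasCompactSupport.fderiv_apply (𝕜 := ℝ) hfc (EuclideanSpace.single j 1)⟩
  -- symmetry of the Hessian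
  have hsymm : ∀ (x : EuclideanSpace ℝ (Fin d)) i j,
      fderiv ℝ (φ j) x (EuclideanSpace.single i 1)
        = fderiv ℝ (φ i) x (EuclideanSpace.single j 1) := by
    intro x i j
    have hdf : DifferentiableAt ℝ (fderiv ℝ f) x :=
      ((hf.fderiv_right (m := 1) (by exact WithTop.coe_le_coe.mpr le_top)).differentiable one_ne_zero).differentiableAt
    have h1 : ∀ u z : EuclideanSpace ℝ (Fin d),
        fderiv ℝ (fun y => fderiv ℝ f y u) x z = fderiv ℝ (fderiv ℝ f) x z u := by
      intro u z
      rw [fderiv_clm_apply hdf (differentiableAt_const u)]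
      simp
    rw [hφdef]
    simp only []
    rw [h1, h1]
    exact (hf.contDiffAt.isSymmSndFDerivAt (by rw [minSmoothness_of_isRCLikeNormedField]; exact WithTop.coe_le_coe.mpr le_top)).eq _ _
  -- antisymmetric part kills the Hessian
  have hCH : ∀ x : EuclideanSpace ℝ (Fin d),
      (∑ i, ∑ j, C x i j * fderiv ℝ (φ j) x (EuclideanSpace.single i 1)) = 0 := by
    intro x
    have h2 : (∑ i, ∑ j, C x i j * fderiv ℝ (φ j) x (EuclideanSpace.single i 1))
        = ∑ i, ∑ j, -(C x i j * fderiv ℝ (φ j) x (EuclideanSpace.single i 1)) := by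
      rw [Finset.sum_comm]
      refine Finset.sum_congr rfl fun i _ => Finset.sum_congr rfl fun j _ => ?_
      rw [hC_anti x j i, hsymm x j i]
      ring
    simp only [Finset.sum_neg_distrib] at h2
    linarith
  -- the two pieces
  have key : ∫ x, ∑ i, ∑ j, ρ x * (A x i j + C x i j)
        * fderiv ℝ (φ j) x (EuclideanSpace.single i 1) ∂volume
      = - ∫ x, ∑ j, (ρ x * G x j + ∑ k, (A x j k + C x k j) * ρ' x k) * φ j x ∂volume :=
    hρAC_div φ hφ
  -- integrability of the first piece
  obtain ⟨Mρ, hMρ⟩ : ∃ Mρ : ℝ,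
      ∀ᵐ x ∂(volume : Measure (EuclideanSpace ℝ (Fin d))), |ρ x| ≤ Mρ := by
    refine ⟨(eLpNormEssSup ρ volume).toReal, ?_⟩
    have hfin : eLpNormEssSup ρ volume < ⊤ := by
      have := hρ_bdd.2; rwa [eLpNorm_exponent_top] at this
    filter_upwards [ae_le_eLpNormEssSup (f := ρ) (μ := volume)] with x hx
    rw [← Real.norm_eq_abs, ← coe_nnnorm]
    exact_mod_cast ENNReal.toReal_mono hfin.ne hx
  have hHcd : ∀ i j, ContDiff ℝ (⊤ : ℕ∞) fun x =>
      fderiv ℝ (φ j) x (EuclideanSpace.single i 1) := fun i j =>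
    ((hφ j).1.fderiv_right (by simp)).clm_apply contDiff_const
  have hHcont : ∀ i j, Continuous fun x =>
      fderiv ℝ (φ j) x (EuclideanSpace.single i 1) := fun i j => (hHcd i j).continuous
  have hHsupp : ∀ i j, HasCompactSupport fun x =>
      fderiv ℝ (φ j) x (EuclideanSpace.single i 1) := fun i j =>
    HasCompactSupport.fderiv_apply (𝕜 := ℝ) (hφ j).2 (EuclideanSpace.single i 1)
  have hg1 : Integrable (fun x => ∑ i, ∑ j, ρ x * (A x i j + C x i j)
      * fderiv ℝ (φ j) x (EuclideanSpace.single i 1)) volume := by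
    have hmeas : AEStronglyMeasurable (fun x => ∑ i, ∑ j, ρ x * (A x i j + C x i j)
        * fderiv ℝ (φ j) x (EuclideanSpace.single i 1)) volume := by
      refine Finset.aestronglyMeasurable_fun_sum _ fun i _ => ?_
      refine Finset.aestronglyMeasurable_fun_sum _ fun j _ => ?_
      exact (hρ_bdd.aestronglyMeasurable.mul
        ((hA_meas i j).add (hC_meas i j)).aestronglyMeasurable).mul
        (hHcont i j).aestronglyMeasurable
    have hB : Integrable (fun x => ∑ i, ∑ j, Mρ * (|MA| + |MC|)
        * |fderiv ℝ (φ j) x (EuclideanSpace.single i 1)|) volume := by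
      refine integrable_finset_sum _ fun i _ => integrable_finset_sum _ fun j _ => ?_
      exact ((hHcont i j).integrable_of_hasCompactSupport (hHsupp i j)).abs.const_mul _
    refine hB.mono' hmeas ?_
    filter_upwards [hMρ, hA_bdd, hC_bdd] with x hρx hAx hCx
    rw [Real.norm_eq_abs]
    refine (Finset.abs_sum_le_sum_abs _ _).trans (Finset.sum_le_sum fun i _ => ?_)
    refine (Finset.abs_sum_le_sum_abs _ _).trans (Finset.sum_le_sum fun j _ => ?_)
    have hMρ0 : 0 ≤ Mρ := (abs_nonneg _).trans hρx
    have h1 : |A x i j + C x i j| ≤ |MA| + |MC| :=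
      (abs_add_le _ _).trans (add_le_add ((hAx i j).trans (le_abs_self MA))
        ((hCx i j).trans (le_abs_self MC)))
    rw [abs_mul, abs_mul]
    exact mul_le_mul (mul_le_mul hρx h1 (abs_nonneg _) hMρ0) le_rfl (abs_nonneg _)
      (mul_nonneg hMρ0 (by positivity))
  -- integrability of the second piece
  have hg2 : Integrable (fun x => ∑ j,
      (ρ x * G x j + ∑ k, (A x j k + C x k j) * ρ' x k) * φ j x) volume := by
    refine integrable_finset_sum _ fun j _ => ?_
    simpa [smul_eq_mul] using
      (hρAC_loc j).integrable_smul_right_of_hasCompactSupport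
        (hφ j).1.continuous (hφ j).2
  -- identify the goal integrand a.e. with the sum of the two pieces
  have hae : (fun x => ((∑ i, ∑ j, A x i j
              * fderiv ℝ (fun y => fderiv ℝ f y (EuclideanSpace.single j 1)) x
                  (EuclideanSpace.single i 1))
          + ∑ i, (G x i + (ρ x)⁻¹ * ∑ j, (A x i j + C x j i) * ρ' x j)
              * fderiv ℝ f x (EuclideanSpace.single i 1)) * ρ x)
      =ᵐ[volume] (fun x => (∑ i, ∑ j, ρ x * (A x i j + C x i j)
          * fderiv ℝ (φ j) x (EuclideanSpace.single i 1))
        + ∑ j, (ρ x * G x j + ∑ k, (A x j k + C x k j) * ρ' x k) * φ j x) := by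
    filter_upwards [hρ_pos] with x hx
    have hρx : ρ x ≠ 0 := (hθ.trans_le hx).ne'
    have hsplit : (∑ i, ∑ j, ρ x * (A x i j + C x i j)
          * fderiv ℝ (φ j) x (EuclideanSpace.single i 1))
        = (∑ i, ∑ j, A x i j * fderiv ℝ (φ j) x (EuclideanSpace.single i 1)) * ρ x
          + (∑ i, ∑ j, C x i j * fderiv ℝ (φ j) x (EuclideanSpace.single i 1)) * ρ x := by
      rw [Finset.sum_mul, Finset.sum_mul, ← Finset.sum_add_distrib]
      refine Finset.sum_congr rfl fun i _ => ?_
      rw [Finset.sum_mul, Finset.sum_mul, ← Finset.sum_add_distrib]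
      exact Finset.sum_congr rfl fun j _ => by ring
    rw [hsplit, hCH x, zero_mul, add_zero, add_mul]
    congr 1
    rw [Finset.sum_mul]
    refine Finset.sum_congr rfl fun i _ => ?_
    show (G x i + (ρ x)⁻¹ * ∑ j, (A x i j + C x j i) * ρ' x j) * φ i x * ρ x
      = (ρ x * G x i + ∑ k, (A x i k + C x k i) * ρ' x k) * φ i x
    have h1 : (ρ x)⁻¹ * ρ x = 1 := inv_mul_cancel₀ hρx
    calc (G x i + (ρ x)⁻¹ * ∑ j, (A x i j + C x j i) * ρ' x j) * φ i x * ρ x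
        = (ρ x * G x i + ((ρ x)⁻¹ * ρ x) * ∑ j, (A x i j + C x j i) * ρ' x j) * φ i x := by
          ring
      _ = (ρ x * G x i + ∑ k, (A x i k + C x k i) * ρ' x k) * φ i x := by
          rw [h1, one_mul]
  rw [integral_congr_ae hae, integral_add hg1 hg2, key]
  ring
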